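/- arXiv:1001.4464 — 2 statements merged into one kernel-verified Lean document; each statement's English description precedes it below -/
import Mathlib

section
/- Degree principle for systems: Let n ≥ 1, d ≥ 1, and let F_1,…,F_m ∈ ℝ[x_1,…,x_n] be symmetric polynomials each of (total) degree at most d. Then there exists x ∈ ℝⁿ with F_1(x) = ⋯ = F_m(x) = 0 if and only if there exists y ∈ ℝⁿ with at most d distinct coordinates such that F_1(y) = ⋯ = F_m(y) = 0. -/
/-!
A symmetric polynomial of degree at most `d` lies in the subalgebra generated by the power sums
`p₁, …, p_d`: by the fundamental theorem it is a polynomial in `e₁, e₂, …` in which, counting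
`eⱼ` with weight `j`, only terms of weight `≤ d` survive, and Newton's identities express
`e₁, …, e_d` through `p₁, …, p_d`. Its value at `x` thus depends only on `p₁(x), …, p_d(x)`.

So it suffices to find a `y` with at most `d` distinct coordinates and the same first `d` power
sums as `x`. Take `y` minimising `p_{d+1}` on the compact set of such points with
`p₂ ≤ p₂(x)`. If `y` had `d + 1` distinct coordinates, the Jacobian of `(p₁, …, p_{d+1})` at `y`
would contain an invertible Vandermonde block, so by the inverse function theorem this map is open
at `y`, and `p_{d+1}` could be lowered with `p₁, …, p_d` fixed.
-/

open Finset Function Filter Topology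

namespace MvPolynomial

variable {σ τ R : Type*} [CommRing R]

theorem isHomogeneous_esymm [Fintype σ] (k : ℕ) : (esymm σ R k).IsHomogeneous k := by
  refine IsHomogeneous.sum _ _ _ fun s hs => ?_
  simpa [(mem_powersetCard.1 hs).2] using
    IsHomogeneous.prod s X (fun _ => 1) fun i _ => isHomogeneous_X R i

theorem isHomogeneous_aeval_monomial {w : τ → ℕ} {g : τ → MvPolynomial σ R}
    (hg : ∀ i, (g i).IsHomogeneous (w i)) (t : τ →₀ ℕ) (c : R) :
    (aeval g (monomial t c)).IsHomogeneous (Finsupp.weight w t) := by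
  rw [aeval_monomial, algebraMap_eq, Finsupp.weight_apply, Finsupp.sum, ← zero_add (∑ _ ∈ _, _)]
  exact (isHomogeneous_C _ _).mul
    (IsHomogeneous.prod _ _ _ fun i _ => by simpa [mul_comm] using (hg i).pow (t i))

theorem homogeneousComponent_aeval {w : τ → ℕ} {g : τ → MvPolynomial σ R}
    (hg : ∀ i, (g i).IsHomogeneous (w i)) (k : ℕ) (φ : MvPolynomial τ R) :
    homogeneousComponent k (aeval g φ) = aeval g (weightedHomogeneousComponent w k φ) := by
  induction φ using induction_on' with
  | monomial t c =>
    rw [homogeneousComponent_of_mem (isHomogeneous_aeval_monomial hg t c),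
      weightedHomogeneousComponent_of_mem (isWeightedHomogeneous_monomial w t c rfl)]
    split_ifs <;> simp
  | add p q hp hq => simp only [map_add, hp, hq]

theorem sum_homogeneousComponent_of_totalDegree_le {φ : MvPolynomial σ R} {d : ℕ}
    (h : φ.totalDegree ≤ d) : ∑ k ∈ range (d + 1), homogeneousComponent k φ = φ := by
  rw [← sum_subset (range_subset_range.2 (Nat.succ_le_succ h)) fun k hk hk' =>
    homogeneousComponent_eq_zero k φ (by simp_all), sum_homogeneousComponent]

theorem aeval_mem_adjoin_of_vars_subset {S : Type*} [CommRing S] [Algebra R S]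
    (g : τ → S) {p : MvPolynomial τ R} {s : Set τ} (hp : ↑p.vars ⊆ s) :
    aeval g p ∈ Algebra.adjoin R (g '' s) := by
  rw [← mem_supported, supported_eq_adjoin_X] at hp
  have : aeval g p ∈ (Algebra.adjoin R (X '' s)).map (aeval g) :=
    Subalgebra.mem_map.2 ⟨p, hp, rfl⟩
  simpa [AlgHom.map_adjoin, ← Set.image_comp, Function.comp_def] using this

theorem IsSymmetric.mem_adjoin_esymm [Fintype σ] {F : MvPolynomial σ R} (hF : F.IsSymmetric)
    {d : ℕ} (hdeg : F.totalDegree ≤ d) :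
    F ∈ Algebra.adjoin R (esymm σ R '' Set.Icc 1 d) := by
  classical
  obtain ⟨G, hG⟩ := esymmAlgHom_surjective R le_rfl ⟨F, hF⟩
  set e : Fin (Fintype.card σ) → MvPolynomial σ R := fun j => esymm σ R (j + 1)
  set w : Fin (Fintype.card σ) → ℕ := fun j => j + 1
  have hFG : aeval e G = F := by rw [← esymmAlgHom_apply, hG]
  have hF_sum : F = ∑ k ∈ range (d + 1), aeval e (weightedHomogeneousComponent w k G) := by
    conv_lhs => rw [← sum_homogeneousComponent_of_totalDegree_le hdeg, ← hFG]
    exact sum_congr rfl fun k _ =>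
      homogeneousComponent_aeval (fun j => isHomogeneous_esymm _) k G
  rw [hF_sum]
  refine Subalgebra.sum_mem _ fun k hk => Algebra.adjoin_mono ?_
    (aeval_mem_adjoin_of_vars_subset e (s := {j | w j ≤ d}) fun j hj => ?_)
  · rintro _ ⟨j, hj, rfl⟩
    exact ⟨j + 1, ⟨by omega, hj⟩, rfl⟩
  · obtain ⟨t, ht, hjt⟩ := (mem_vars_iff_mem_support j).1 hj
    have hweight : Finsupp.weight w t = k :=
      weightedHomogeneousComponent_isWeightedHomogeneous k G (mem_support_iff.1 ht)
    have hjw := Finsupp.le_weight_of_ne_zero' w (Finsupp.mem_support_iff.1 hjt)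
    simp only [Set.mem_ofPred_eq, mem_range] at hjw hk ⊢
    omega

variable [Algebra ℚ R]

theorem esymm_mem_adjoin_psum (σ : Type*) [Fintype σ] (k : ℕ) :
    esymm σ R k ∈ Algebra.adjoin R (psum σ R '' Set.Icc 1 k) := by
  induction k using Nat.strong_induction_on with
  | _ k ih =>
  rcases k.eq_zero_or_pos with rfl | hk
  · simp
  set A := Algebra.adjoin R (psum σ R '' Set.Icc 1 k)
  have hmul : (k : MvPolynomial σ R) * esymm σ R k ∈ A := by
    rw [mul_esymm_eq_sum]
    refine A.mul_mem (A.pow_mem (A.neg_mem A.one_mem) _) (A.sum_mem fun a ha => ?_)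
    rw [mem_filter, HasAntidiagonal.mem_antidiagonal] at ha
    refine A.mul_mem (A.mul_mem (A.pow_mem (A.neg_mem A.one_mem) _) ?_)
      (Algebra.subset_adjoin ⟨a.2, ⟨by omega, by omega⟩, rfl⟩)
    exact Algebra.adjoin_mono (Set.image_mono (Set.Icc_subset_Icc le_rfl (by omega)))
      (ih a.1 ha.2)
  have := A.smul_mem hmul (algebraMap ℚ R (k : ℚ)⁻¹)
  rwa [algebraMap_smul, ← nsmul_eq_mul, ← Nat.cast_smul_eq_nsmul ℚ,
    inv_smul_smul₀ (Nat.cast_ne_zero.2 hk.ne')] at this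

theorem IsSymmetric.mem_adjoin_psum [Fintype σ] {F : MvPolynomial σ R} (hF : F.IsSymmetric)
    {d : ℕ} (hdeg : F.totalDegree ≤ d) :
    F ∈ Algebra.adjoin R (psum σ R '' Set.Icc 1 d) := by
  refine Algebra.adjoin_le ?_ (hF.mem_adjoin_esymm hdeg)
  rintro _ ⟨k, hk, rfl⟩
  exact Algebra.adjoin_mono (Set.image_mono (Set.Icc_subset_Icc le_rfl hk.2))
    (esymm_mem_adjoin_psum σ k)

theorem IsSymmetric.eval_eq_of_eval_psum_eq [Fintype σ] {F : MvPolynomial σ R}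
    (hF : F.IsSymmetric) {d : ℕ} (hdeg : F.totalDegree ≤ d) {x y : σ → R}
    (h : ∀ j ∈ Set.Icc 1 d, eval x (psum σ R j) = eval y (psum σ R j)) :
    eval x F = eval y F := by
  have := AlgHom.adjoin_le_equalizer (aeval x) (aeval y) (s := psum σ R '' Set.Icc 1 d)
    (by rintro _ ⟨j, hj, rfl⟩; simpa [coe_aeval_eq_eval] using h j hj)
    (hF.mem_adjoin_psum hdeg)
  simpa [coe_aeval_eq_eval] using this

end MvPolynomial

section PowerSums

variable {ι : Type*} [Fintype ι]

def powerSums (k : ℕ) (z : ι → ℝ) : Fin k → ℝ := fun j => ∑ i, z i ^ ((j : ℕ) + 1)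

theorem hasStrictFDerivAt_powerSums (k : ℕ) (y : ι → ℝ) :
    HasStrictFDerivAt (powerSums k) (ContinuousLinearMap.pi fun j : Fin k =>
      ∑ i, (((j : ℕ) + 1 : ℝ) * y i ^ (j : ℕ)) •
        ContinuousLinearMap.proj (R := ℝ) (φ := fun _ : ι => ℝ) i) y := by
  refine hasStrictFDerivAt_pi.2 fun j => HasStrictFDerivAt.fun_sum fun i _ => ?_
  simpa [Function.comp_def] using
    (hasStrictDerivAt_pow ((j : ℕ) + 1) (y i)).comp_hasStrictFDerivAt y
      (ContinuousLinearMap.proj (R := ℝ) (φ := fun _ : ι => ℝ) i).hasStrictFDerivAt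

theorem exists_sum_pow_mul_eq {k : ℕ} {y : ι → ℝ} {e : Fin k → ι} (he : Injective (y ∘ e))
    (w : Fin k → ℝ) : ∃ v : ι → ℝ, ∀ j : Fin k, ∑ i, y i ^ (j : ℕ) * v i = w j := by
  classical
  have hV : IsUnit (Matrix.vandermonde (y ∘ e)).transpose := by
    rw [Matrix.isUnit_iff_isUnit_det, Matrix.det_transpose, isUnit_iff_ne_zero]
    exact Matrix.det_vandermonde_ne_zero_iff.2 he
  obtain ⟨u, hu⟩ := Matrix.mulVec_surjective_iff_isUnit.2 hV w
  refine ⟨∑ b, Pi.single (e b) (u b), fun j => ?_⟩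
  rw [← hu]
  simp only [Finset.sum_apply, mul_sum]
  rw [Finset.sum_comm]
  simp [Pi.single_apply, Matrix.mulVec, dotProduct, mul_comm]

theorem range_powerSums_mem_nhds {k : ℕ} {y : ι → ℝ} {e : Fin k → ι} (he : Injective (y ∘ e)) :
    Set.range (powerSums (ι := ι) k) ∈ 𝓝 (powerSums k y) := by
  rw [← (hasStrictFDerivAt_powerSums k y).map_nhds_eq_of_surj]
  · exact range_mem_map
  refine LinearMap.range_eq_top.2 fun w => ?_
  obtain ⟨v, hv⟩ := exists_sum_pow_mul_eq he fun j => w j / ((j : ℕ) + 1)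
  refine ⟨v, funext fun j => ?_⟩
  simp [mul_assoc, ← Finset.mul_sum, hv j,
    mul_div_cancel₀ _ (Nat.cast_add_one_ne_zero (R := ℝ) (j : ℕ))]

theorem exists_injective_comp_of_le_card_image {α : Type*} [DecidableEq α] {k : ℕ} (f : ι → α)
    (h : k ≤ #(univ.image f)) : ∃ e : Fin k → ι, Injective (f ∘ e) := by
  obtain ⟨s, hs, rfl⟩ := exists_subset_card_eq h
  have : ∀ b, ∃ i, f i = s.equivFin.symm b := fun b => by
    simpa using hs (s.equivFin.symm b).2
  choose e he using this
  exact ⟨e, fun a b hab => s.equivFin.symm.injective (Subtype.ext (by simpa [he] using hab))⟩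

theorem isCompact_setOf_sum_sq_le (c : ℝ) : IsCompact {z : ι → ℝ | ∑ i, z i ^ 2 ≤ c} := by
  refine (isCompact_closedBall (0 : ι → ℝ) √c).of_isClosed_subset
    (isClosed_le (by fun_prop) continuous_const) fun z hz => ?_
  rw [mem_closedBall_zero_iff, pi_norm_le_iff_of_nonneg (Real.sqrt_nonneg c)]
  exact fun i => Real.abs_le_sqrt
    ((single_le_sum (fun j _ => sq_nonneg (z j)) (mem_univ i)).trans hz)

theorem exists_card_image_le_and_sum_pow_eq {d : ℕ} (hd : 1 ≤ d) (x : ι → ℝ) :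
    ∃ y : ι → ℝ, #(univ.image y) ≤ d ∧ ∀ j ∈ Set.Icc 1 d, ∑ i, y i ^ j = ∑ i, x i ^ j := by
  classical
  -- the bound on `∑ z i ^ 2` makes `K` compact also when `d = 1`
  set K := {z : ι → ℝ | ∑ i, z i ^ 2 ≤ ∑ i, x i ^ 2} ∩
    ⋂ j ∈ Set.Icc 1 d, {z | ∑ i, z i ^ j = ∑ i, x i ^ j}
  have hK : IsCompact K := (isCompact_setOf_sum_sq_le _).inter_right
    (isClosed_biInter fun j _ => isClosed_eq (by fun_prop) continuous_const)
  obtain ⟨y, hyK, hymin⟩ := hK.exists_isMinOn ⟨x, by simp [K]⟩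
    (f := fun z => ∑ i, z i ^ (d + 1)) (by fun_prop)
  simp only [K, Set.mem_inter_iff, Set.mem_ofPred_eq, Set.mem_iInter] at hyK
  refine ⟨y, ?_, hyK.2⟩
  by_contra! hcard
  obtain ⟨e, he⟩ := exists_injective_comp_of_le_card_image y hcard
  set P := powerSums (ι := ι) (d + 1)
  set δ : Fin (d + 1) → ℝ := Pi.single (Fin.last d) 1
  have hpath : Tendsto (fun ε : ℝ => P y - ε • δ) (𝓝 0) (𝓝 (P y)) :=
    (by fun_prop : Continuous fun ε : ℝ => P y - ε • δ).tendsto' 0 _ (by simp)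
  obtain ⟨ε, hε, z, hz⟩ : ∃ ε > 0, ∃ z, P z = P y - ε • δ :=
    (hpath.eventually_mem (range_powerSums_mem_nhds he)).exists_gt
  have hz_le : ∀ b, P z b ≤ P y b := fun b => by
    rw [hz]; by_cases hb : b = Fin.last d <;> simp [δ, hb, hε.le]
  have hz_eq : ∀ b ≠ Fin.last d, P z b = P y b := fun b hb => by simp [hz, δ, hb]
  have hz_last : P z (Fin.last d) < P y (Fin.last d) := by simp [hz, δ, hε]
  have hzK : z ∈ K := by
    refine ⟨(hz_le ⟨1, by omega⟩).trans hyK.1, Set.mem_iInter₂.2 fun j hj => ?_⟩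
    obtain ⟨j, rfl⟩ := Nat.exists_eq_add_one_of_ne_zero (by grind : j ≠ 0)
    exact (hz_eq ⟨j, by grind⟩ (by grind [Fin.ext_iff])).trans (hyK.2 _ hj)
  exact hz_last.not_ge (hymin hzK)

end PowerSums

theorem degree_principle_system_general (n d m : ℕ) (hd : 1 ≤ d)
    (F : Fin m → MvPolynomial (Fin n) ℝ)
    (hF : ∀ i, MvPolynomial.IsSymmetric (F i))
    (hdeg : ∀ i, (F i).totalDegree ≤ d) :
    (∃ x : Fin n → ℝ, ∀ i, MvPolynomial.eval x (F i) = 0) ↔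
      (∃ y : Fin n → ℝ, (Finset.univ.image y).card ≤ d ∧
        ∀ i, MvPolynomial.eval y (F i) = 0) := by
  refine ⟨fun ⟨x, hx⟩ => ?_, fun ⟨y, _, hy⟩ => ⟨y, hy⟩⟩
  obtain ⟨y, hcard, hpow⟩ := exists_card_image_le_and_sum_pow_eq hd x
  refine ⟨y, hcard, fun i => ?_⟩
  have hpsum : ∀ j ∈ Set.Icc 1 d,
      MvPolynomial.eval y (MvPolynomial.psum (Fin n) ℝ j) =
        MvPolynomial.eval x (MvPolynomial.psum (Fin n) ℝ j) := fun j hj => by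
    simpa [MvPolynomial.psum] using hpow j hj
  rw [(hF i).eval_eq_of_eval_psum_eq (hdeg i) hpsum]
  exact hx i

/-- **Degree principle for systems.** Symmetric real polynomials `F 1, …, F m` of total degree
at most `d` have a common real zero iff they have a common real zero with at most `d` distinct
coordinates. -/
theorem degree_principle_system (n d m : ℕ) (hn : 1 ≤ n) (hd : 1 ≤ d)
    (F : Fin m → MvPolynomial (Fin n) ℝ)
    (hF : ∀ i, MvPolynomial.IsSymmetric (F i))
    (hdeg : ∀ i, (F i).totalDegree ≤ d) :
    (∃ x : Fin n → ℝ, ∀ i, MvPolynomial.eval x (F i) = 0) ↔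
      (∃ y : Fin n → ℝ, (Finset.univ.image y).card ≤ d ∧
        ∀ i, MvPolynomial.eval y (F i) = 0) :=
  degree_principle_system_general n d m hd F hF hdeg
end

section
/- Let n ≥ 1, let s satisfy 2 ≤ s ≤ n, fix a_1,…,a_s ∈ ℝ, and let c ∈ ℝⁿ. Then for every z ∈ H_s(a_1,…,a_s) there exists z′ ∈ H_s(a_1,…,a_s) such that the polynomial f_{z′} has at most s distinct roots and c·z′ ≤ c·z; consequently the minimum of the linear function z ↦ c·z over H_s(a_1,…,a_s) equals its minimum over the subset of points z whose polynomial f_z has at most s distinct roots. -/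
/-!
Parametrising real-rooted monic polynomials by their roots exhibits `H_s(a)` as the continuous
image of a closed set of root vectors, which is bounded because `z₁² - 2 z₂` is the sum of the
squares of the roots. So `H_s(a)` is compact, and by Krein–Milman a linear function takes, at some
extreme point of `H_s(a)`, a value at most its value at any given point.

If `f_z = w · ∏ (X - t)`, the product over the `k > s` distinct roots `t`, then `deg w = n - k`
is below `n - s`, and since a polynomial with simple real roots stays real-rooted under small
constant perturbations, `f_z ± λ w` is hyperbolic for small `λ`. These polynomials have the same
first `s` coefficients as `f_z`, so `z` is the midpoint of a segment in `H_s(a)`: it is not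
extreme.
-/

/-- The monic polynomial `t^n − z_1 t^{n−1} + z_2 t^{n−2} − ⋯ + (−1)^n z_n` associated to
`z ∈ ℝⁿ` (the coordinate `z i` playing the role of `z_{i+1}` for `i : Fin n`). -/
noncomputable def polyOfCoeffs (n : ℕ) (z : Fin n → ℝ) : Polynomial ℝ :=
  Polynomial.X ^ n +
    ∑ i : Fin n, Polynomial.C ((-1) ^ ((i : ℕ) + 1) * z i) * Polynomial.X ^ (n - ((i : ℕ) + 1))

open Polynomial Filter Topology Set

theorem Multiset.esymm_one {R : Type*} [CommSemiring R] (s : Multiset R) :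
    s.esymm 1 = s.sum := by
  simp [Multiset.esymm, Multiset.powersetCard_one]

theorem Multiset.sum_sq_eq_sum_map_sq_add_two_mul_esymm_two {R : Type*} [CommSemiring R]
    (s : Multiset R) : s.sum ^ 2 = (s.map (· ^ 2)).sum + 2 * s.esymm 2 := by
  induction s using Multiset.induction_on with
  | empty => simp [Multiset.esymm, Multiset.powersetCard_zero_right]
  | cons a s ih =>
    have h2 : (a ::ₘ s).esymm 2 = s.esymm 2 + a * s.esymm 1 := by
      simp [Multiset.esymm, Multiset.powersetCard_cons, Multiset.sum_map_mul_left]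
    rw [h2, Multiset.esymm_one, Multiset.sum_cons, Multiset.map_cons, Multiset.sum_cons, add_sq,
      ih]
    ring

theorem Multiset.exists_fin_map_univ_eq {α : Type*} (m : Multiset α) {n : ℕ}
    (hn : Multiset.card m = n) : ∃ ρ : Fin n → α, Finset.univ.val.map ρ = m := by
  subst hn
  obtain ⟨L, rfl⟩ : ∃ L : List α, (L : Multiset α) = m := Quot.exists_rep m
  refine ⟨fun i => L[i.cast (Multiset.coe_card L)], ?_⟩
  rw [Fin.univ_val_map]
  congr 1
  exact List.ext_getElem (by simp) (by simp)

theorem ContinuousOn.exists_mem_Ioo_eq_zero_of_mul_neg {α : Type*} [TopologicalSpace α]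
    [ConditionallyCompleteLinearOrder α] [OrderTopology α] [DenselyOrdered α] {f : α → ℝ}
    {a b : α} (hab : a ≤ b) (hf : ContinuousOn f (Icc a b)) (h : f a * f b < 0) :
    ∃ x ∈ Ioo a b, f x = 0 := by
  rcases mul_neg_iff.1 h with ⟨ha, hb⟩ | ⟨ha, hb⟩
  · exact intermediate_value_Ioo' hab hf ⟨hb, ha⟩
  · exact intermediate_value_Ioo hab hf ⟨ha, hb⟩

theorem IsCompact.exists_mem_extremePoints_le {E : Type*} [AddCommGroup E] [Module ℝ E]
    [TopologicalSpace E] [T2Space E] [IsTopologicalAddGroup E] [ContinuousSMul ℝ E]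
    [LocallyConvexSpace ℝ E] {S : Set E} (hS : IsCompact S) (φ : E →L[ℝ] ℝ) {z : E}
    (hz : z ∈ S) : ∃ z' ∈ S.extremePoints ℝ, φ z' ≤ φ z := by
  obtain ⟨x, hxS, hx⟩ := hS.exists_isMinOn ⟨z, hz⟩ φ.continuous.continuousOn
  have hexp : IsExposed ℝ S {y ∈ S | ∀ w ∈ S, φ y ≤ φ w} := fun _ => ⟨-φ, by simp⟩
  obtain ⟨y, hy⟩ := (hexp.isCompact hS).extremePoints_nonempty ⟨x, hxS, hx⟩
  exact ⟨y, hexp.isExtreme.extremePoints_subset_extremePoints hy, hy.1.2 z hz⟩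

namespace Polynomial

theorem prod_X_sub_C_eq_prod_map_univ {R ι : Type*} [CommRing R] [Fintype ι] (ρ : ι → R) :
    ∏ i, (X - C (ρ i)) = ((Finset.univ.val.map ρ).map fun t => X - C t).prod := by
  rw [Finset.prod_eq_multiset_prod, Multiset.map_map]
  rfl

theorem eventually_eval_sub_mul_eval_add_neg {q : ℝ[X]} {t : ℝ} (hq : q.eval t ≠ 0) :
    ∀ᶠ η in 𝓝[>] 0, ((X - C t) * q).eval (t - η) * ((X - C t) * q).eval (t + η) < 0 := by
  have hpos : ∀ᶠ η in 𝓝 0, 0 < q.eval (t - η) * q.eval (t + η) :=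
    ContinuousAt.eventually_lt continuousAt_const (by fun_prop) (by simpa using mul_self_pos.2 hq)
  filter_upwards [hpos.filter_mono nhdsWithin_le_nhds, self_mem_nhdsWithin] with η hη (hη0 : 0 < η)
  simp only [eval_mul, eval_sub, eval_X, eval_C]
  nlinarith [mul_pos (mul_pos hη0 hη0) hη]

theorem splits_of_eval_mul_eval_neg {p : ℝ[X]} {T : Finset ℝ} {η : ℝ} (hη : 0 < η)
    (hsep : ∀ t ∈ T, ∀ u ∈ T, t ≠ u → 2 * η < |t - u|)
    (hsign : ∀ t ∈ T, p.eval (t - η) * p.eval (t + η) < 0) (hdeg : p.natDegree ≤ T.card) :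
    p.Splits := by
  by_cases hp : p = 0
  · rw [hp]
    exact Splits.zero
  have hroot : ∀ t ∈ T, ∃ x ∈ Ioo (t - η) (t + η), p.IsRoot x := fun t ht =>
    p.continuous.continuousOn.exists_mem_Ioo_eq_zero_of_mul_neg (by linarith) (hsign t ht)
  choose! x hxI hxroot using hroot
  have hcard : T.card ≤ p.roots.toFinset.card := by
    refine Finset.card_le_card_of_injOn x (fun t ht => ?_) (fun t ht u hu hxtu => ?_)
    · simpa [hp] using hxroot t ht
    · by_contra htu
      obtain ⟨ht1, ht2⟩ := hxI t ht
      obtain ⟨hu1, hu2⟩ := hxI u hu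
      have : |t - u| < 2 * η := abs_sub_lt_iff.2 ⟨by linarith, by linarith⟩
      linarith [hsep t ht u hu htu]
  rw [splits_iff_card_roots]
  exact le_antisymm (card_roots' p) (hdeg.trans (hcard.trans (Multiset.toFinset_card_le _)))

theorem eventually_splits_prod_X_sub_C_add_C (T : Finset ℝ) :
    ∀ᶠ c in 𝓝 0, (∏ t ∈ T, (X - C t) + C c).Splits := by
  set r := ∏ t ∈ T, (X - C t)
  have hsign : ∀ t ∈ T, ∀ᶠ η in 𝓝[>] 0, r.eval (t - η) * r.eval (t + η) < 0 := by
    intro t ht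
    have hq : (∏ u ∈ T.erase t, (X - C u)).eval t ≠ 0 := by
      simp only [eval_prod, eval_sub, eval_X, eval_C]
      exact Finset.prod_ne_zero_iff.2 fun u hu => sub_ne_zero.2 (Finset.ne_of_mem_erase hu).symm
    rw [show r = (X - C t) * ∏ u ∈ T.erase t, (X - C u) from (Finset.mul_prod_erase T _ ht).symm]
    exact eventually_eval_sub_mul_eval_add_neg hq
  have hsep : ∀ t ∈ T, ∀ u ∈ T, ∀ᶠ η in 𝓝[>] (0 : ℝ), t ≠ u → 2 * η < |t - u| := by
    intro t _ u _
    rcases eq_or_ne t u with rfl | htu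
    · exact .of_forall fun _ h => (h rfl).elim
    · refine ((ContinuousAt.eventually_lt (by fun_prop) continuousAt_const ?_).filter_mono
        nhdsWithin_le_nhds).mono fun _ h _ => h
      simpa [sub_eq_zero] using htu
  obtain ⟨η, ⟨(hη : 0 < η), hηsign⟩, hηsep⟩ := ((eventually_mem_nhdsWithin.and
    ((eventually_all_finset T).2 hsign)).and
    ((eventually_all_finset T).2 fun t ht => (eventually_all_finset T).2 (hsep t ht))).exists
  have hsign' : ∀ᶠ c in 𝓝 (0 : ℝ), ∀ t ∈ T, (r.eval (t - η) + c) * (r.eval (t + η) + c) < 0 :=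
    (eventually_all_finset T).2 fun t ht =>
      ContinuousAt.eventually_lt (by fun_prop) continuousAt_const (by simpa using hηsign t ht)
  filter_upwards [hsign'] with c hc
  refine splits_of_eval_mul_eval_neg hη hηsep (by simpa using hc) ?_
  exact (natDegree_add_le _ _).trans (by simp [r])

theorem Monic.exists_eventually_splits_add_C_mul {f : ℝ[X]} (hm : f.Monic) (hf : f.Splits) :
    ∃ w : ℝ[X], w.Monic ∧ w.natDegree + f.roots.toFinset.card = f.natDegree ∧
      ∀ᶠ c in 𝓝 0, (f + C c * w).Splits := by
  set w := ((f.roots - f.roots.dedup).map fun x => X - C x).prod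
  have hw : f = w * ∏ t ∈ f.roots.toFinset, (X - C t) := by
    conv_lhs => rw [hf.eq_prod_roots_of_monic hm]
    rw [Finset.prod_eq_multiset_prod, Multiset.toFinset_val, ← Multiset.prod_add,
      ← Multiset.map_add, tsub_add_cancel_of_le (Multiset.dedup_le _)]
  refine ⟨w, monic_multiset_prod_of_monic _ _ fun x _ => monic_X_sub_C x, ?_, ?_⟩
  · rw [natDegree_multiset_prod_X_sub_C_eq_card, Multiset.card_sub (Multiset.dedup_le _),
      Multiset.card_toFinset, ← splits_iff_card_roots.1 hf,
      Nat.sub_add_cancel (Multiset.card_le_card (Multiset.dedup_le _))]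
  · have hws : w.Splits := Splits.multisetProd fun g hg => by
      obtain ⟨x, _, rfl⟩ := Multiset.mem_map.1 hg
      exact Splits.X_sub_C x
    filter_upwards [eventually_splits_prod_X_sub_C_add_C f.roots.toFinset] with c hc
    rw [hw, show ∀ r : ℝ[X], w * r + C c * w = w * (r + C c) from fun r => by ring]
    exact hws.mul hc

end Polynomial

noncomputable def coeffsOfPoly (n : ℕ) (p : ℝ[X]) : Fin n → ℝ :=
  fun i => (-1) ^ ((i : ℕ) + 1) * p.coeff (n - ((i : ℕ) + 1))

section polyOfCoeffs

variable {n : ℕ}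

theorem coeff_polyOfCoeffs (z : Fin n → ℝ) (i : Fin n) :
    (polyOfCoeffs n z).coeff (n - ((i : ℕ) + 1)) = (-1) ^ ((i : ℕ) + 1) * z i := by
  simp only [polyOfCoeffs, coeff_add, coeff_X_pow, finsetSum_coeff, coeff_C_mul_X_pow]
  rw [if_neg (by omega), Finset.sum_eq_single i (fun j _ hji => if_neg ?_) (by simp)]
  · simp
  · exact fun h => hji (Fin.ext (by omega))

theorem degree_polyOfCoeffs_sub_X_pow_lt (z : Fin n → ℝ) :
    (polyOfCoeffs n z - X ^ n).degree < (n : WithBot ℕ) := by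
  unfold polyOfCoeffs
  rw [add_sub_cancel_left]
  refine (degree_sum_le _ _).trans_lt ((Finset.sup_lt_iff (WithBot.bot_lt_coe n)).2 ?_)
  exact fun i _ => (degree_C_mul_X_pow_le _ _).trans_lt
    (WithBot.coe_lt_coe.2 (Nat.sub_lt i.pos i.val.succ_pos))

theorem polyOfCoeffs_monic (z : Fin n → ℝ) : (polyOfCoeffs n z).Monic := by
  simpa using monic_X_pow_add (degree_polyOfCoeffs_sub_X_pow_lt z)

theorem natDegree_polyOfCoeffs (z : Fin n → ℝ) : (polyOfCoeffs n z).natDegree = n := by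
  simpa using natDegree_add_eq_left_of_degree_lt
    ((degree_polyOfCoeffs_sub_X_pow_lt z).trans_eq (degree_X_pow n).symm)

theorem coeffsOfPoly_polyOfCoeffs (z : Fin n → ℝ) : coeffsOfPoly n (polyOfCoeffs n z) = z := by
  ext i
  simp [coeffsOfPoly, coeff_polyOfCoeffs, ← mul_assoc, ← mul_pow]

theorem polyOfCoeffs_coeffsOfPoly {p : ℝ[X]} (hp : p.Monic) (hpn : p.natDegree = n) :
    polyOfCoeffs n (coeffsOfPoly n p) = p := by
  ext m
  rcases lt_trichotomy m n with hm | rfl | hm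
  · obtain ⟨i, rfl⟩ : ∃ i : Fin n, n - ((i : ℕ) + 1) = m :=
      ⟨⟨n - 1 - m, by omega⟩, show n - (n - 1 - m + 1) = m by omega⟩
    simp [coeff_polyOfCoeffs, coeffsOfPoly, ← mul_assoc, ← mul_pow]
  · have h1 := (polyOfCoeffs_monic (coeffsOfPoly m p)).coeff_natDegree
    rw [natDegree_polyOfCoeffs] at h1
    rw [h1, ← hpn, hp.coeff_natDegree]
  · rw [coeff_eq_zero_of_natDegree_lt (by rwa [natDegree_polyOfCoeffs]),
      coeff_eq_zero_of_natDegree_lt (by rwa [hpn])]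

theorem coeffsOfPoly_add_C_mul (p q : ℝ[X]) (c : ℝ) :
    coeffsOfPoly n (p + C c * q) = coeffsOfPoly n p + c • coeffsOfPoly n q := by
  ext i
  simp only [coeffsOfPoly, coeff_add, coeff_C_mul, Pi.add_apply, Pi.smul_apply, smul_eq_mul]
  ring

end polyOfCoeffs

noncomputable def rootsToCoeffs (n : ℕ) (ρ : Fin n → ℝ) : Fin n → ℝ :=
  coeffsOfPoly n (∏ i, (X - C (ρ i)))

section rootsToCoeffs

variable {n : ℕ}

theorem polyOfCoeffs_rootsToCoeffs (ρ : Fin n → ℝ) :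
    polyOfCoeffs n (rootsToCoeffs n ρ) = ∏ i, (X - C (ρ i)) :=
  polyOfCoeffs_coeffsOfPoly (monic_prod_of_monic _ _ fun i _ => monic_X_sub_C (ρ i)) (by simp)

theorem rootsToCoeffs_apply (ρ : Fin n → ℝ) (i : Fin n) :
    rootsToCoeffs n ρ i = (Finset.univ.val.map ρ).esymm ((i : ℕ) + 1) := by
  have hcard : Multiset.card (Finset.univ.val.map ρ) = n := by simp
  rw [rootsToCoeffs, coeffsOfPoly, prod_X_sub_C_eq_prod_map_univ,
    Multiset.prod_X_sub_C_coeff _ (by omega), hcard, Nat.sub_sub_self (by omega),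
    ← mul_assoc, ← mul_pow]
  simp

theorem continuous_rootsToCoeffs : Continuous (rootsToCoeffs n) :=
  continuous_pi fun i => by
    simp_rw [rootsToCoeffs_apply, Finset.esymm_map_val]
    fun_prop

theorem range_rootsToCoeffs : range (rootsToCoeffs n) = {z | (polyOfCoeffs n z).Splits} := by
  ext z
  refine ⟨?_, fun hz => ?_⟩
  · rintro ⟨ρ, rfl⟩
    show (polyOfCoeffs n (rootsToCoeffs n ρ)).Splits
    rw [polyOfCoeffs_rootsToCoeffs]
    exact Splits.prod fun i _ => Splits.X_sub_C _
  · obtain ⟨ρ, hρ⟩ := Multiset.exists_fin_map_univ_eq _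
      ((splits_iff_card_roots.1 hz).trans (natDegree_polyOfCoeffs z))
    refine ⟨ρ, ?_⟩
    rw [rootsToCoeffs, prod_X_sub_C_eq_prod_map_univ, hρ,
      ← hz.eq_prod_roots_of_monic (polyOfCoeffs_monic z), coeffsOfPoly_polyOfCoeffs]

theorem sum_sq_eq_rootsToCoeffs (hn : 2 ≤ n) (ρ : Fin n → ℝ) :
    ∑ i, ρ i ^ 2 = rootsToCoeffs n ρ ⟨0, by omega⟩ ^ 2 - 2 * rootsToCoeffs n ρ ⟨1, hn⟩ := by
  rw [rootsToCoeffs_apply, rootsToCoeffs_apply, zero_add, Multiset.esymm_one,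
    Multiset.sum_sq_eq_sum_map_sq_add_two_mul_esymm_two, Multiset.map_map]
  simp [Finset.sum_eq_multiset_sum]

end rootsToCoeffs

/-- The set `H_s(a_1,…,a_s)`. -/
def hyperbolicSlice (n s : ℕ) (a : Fin n → ℝ) : Set (Fin n → ℝ) :=
  {z | (∀ i : Fin n, (i : ℕ) < s → z i = a i) ∧ (polyOfCoeffs n z).Splits}

section hyperbolicSlice

variable {n s : ℕ} {a : Fin n → ℝ}

theorem isCompact_hyperbolicSlice (hs : 2 ≤ s) (hsn : s ≤ n) :
    IsCompact (hyperbolicSlice n s a) := by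
  set K := rootsToCoeffs n ⁻¹' {z | ∀ i : Fin n, (i : ℕ) < s → z i = a i}
  have hK : hyperbolicSlice n s a = rootsToCoeffs n '' K := by
    rw [image_preimage_eq_range_inter, range_rootsToCoeffs, hyperbolicSlice, inter_comm]
    rfl
  have hKclosed : IsClosed K := by
    refine IsClosed.preimage continuous_rootsToCoeffs ?_
    simp only [ofPred_forall]
    exact isClosed_iInter fun i => isClosed_iInter fun _ =>
      isClosed_eq (continuous_apply i) continuous_const
  set B := √(a ⟨0, by omega⟩ ^ 2 - 2 * a ⟨1, by omega⟩)
  have hKbdd : K ⊆ univ.pi fun _ => Icc (-B) B := by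
    intro ρ hρ i _
    have hsq := sum_sq_eq_rootsToCoeffs (by omega) ρ
    rw [hρ ⟨0, _⟩ (show 0 < s by omega), hρ ⟨1, _⟩ (show 1 < s by omega)] at hsq
    refine abs_le.1 (Real.abs_le_sqrt ?_)
    rw [← hsq]
    exact Finset.single_le_sum (fun j _ => sq_nonneg (ρ j)) (Finset.mem_univ i)
  rw [hK]
  exact ((isCompact_univ_pi fun _ => isCompact_Icc).of_isClosed_subset hKclosed hKbdd).image
    continuous_rootsToCoeffs

theorem card_roots_toFinset_le_of_mem_extremePoints {z : Fin n → ℝ}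
    (hz : z ∈ (hyperbolicSlice n s a).extremePoints ℝ) :
    (polyOfCoeffs n z).roots.toFinset.card ≤ s := by
  obtain ⟨⟨hza, hsplit⟩, hext⟩ := hz
  obtain ⟨w, hwm, hwdeg, hev⟩ := (polyOfCoeffs_monic z).exists_eventually_splits_add_C_mul hsplit
  rw [natDegree_polyOfCoeffs] at hwdeg
  set f := polyOfCoeffs n z
  by_contra! hk
  set δ := coeffsOfPoly n w
  have hδ_low : ∀ i : Fin n, (i : ℕ) < s → δ i = 0 := fun i hi => by
    simp [δ, coeffsOfPoly, coeff_eq_zero_of_natDegree_lt (by omega : w.natDegree < n - (i + 1))]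
  have hδ : δ ≠ 0 := by
    intro h
    have := congrFun h ⟨n - 1 - w.natDegree, by omega⟩
    simp [δ, coeffsOfPoly, show n - (n - 1 - w.natDegree + 1) = w.natDegree by omega,
      hwm.coeff_natDegree] at this
  have hmem : ∀ c, (f + C c * w).Splits → z + c • δ ∈ hyperbolicSlice n s a := by
    intro c hc
    have hdeg : (C c * w).degree < f.degree :=
      degree_lt_degree ((natDegree_C_mul_le c w).trans_lt (by rw [natDegree_polyOfCoeffs]; omega))
    have hpoly : polyOfCoeffs n (z + c • δ) = f + C c * w := by
      rw [← coeffsOfPoly_polyOfCoeffs z, ← coeffsOfPoly_add_C_mul,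
        polyOfCoeffs_coeffsOfPoly ((polyOfCoeffs_monic z).add_of_left hdeg)
          ((natDegree_add_eq_left_of_degree_lt hdeg).trans (natDegree_polyOfCoeffs z))]
    exact ⟨fun i hi => by simp [hza i hi, hδ_low i hi], hpoly ▸ hc⟩
  obtain ⟨c, ⟨hcp, hcm⟩, hc0⟩ : ∃ c, ((f + C c * w).Splits ∧ (f + C (-c) * w).Splits) ∧ c ≠ 0 :=
    (((hev.and (continuous_neg.tendsto' 0 0 neg_zero |>.eventually hev)).filter_mono
      nhdsWithin_le_nhds).and self_mem_nhdsWithin).exists (f := 𝓝[≠] 0)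
  have hseg := mem_openSegment_sub_add (𝕜 := ℝ) z (c • δ)
  rw [sub_eq_add_neg, ← neg_smul] at hseg
  have := hext (hmem _ hcm) (hmem _ hcp) hseg
  exact hδ ((smul_eq_zero.1 (by simpa using this)).resolve_left (neg_ne_zero.2 hc0))

end hyperbolicSlice

theorem linear_min_on_Hs_general (n s : ℕ) (hs2 : 2 ≤ s) (hsn : s ≤ n)
    (a : Fin n → ℝ) (c : Fin n → ℝ) :
    (∀ z ∈ {z : Fin n → ℝ | (∀ i : Fin n, (i : ℕ) < s → z i = a i) ∧
        (polyOfCoeffs n z).Splits},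
      ∃ z' ∈ {z : Fin n → ℝ | (∀ i : Fin n, (i : ℕ) < s → z i = a i) ∧
          (polyOfCoeffs n z).Splits},
        (polyOfCoeffs n z').roots.toFinset.card ≤ s ∧
        ∑ i, c i * z' i ≤ ∑ i, c i * z i) ∧
    sInf ((fun z : Fin n → ℝ => ∑ i, c i * z i) ''
        {z : Fin n → ℝ | (∀ i : Fin n, (i : ℕ) < s → z i = a i) ∧
          (polyOfCoeffs n z).Splits}) =
      sInf ((fun z : Fin n → ℝ => ∑ i, c i * z i) ''
        {z : Fin n → ℝ | ((∀ i : Fin n, (i : ℕ) < s → z i = a i) ∧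
            (polyOfCoeffs n z).Splits) ∧
          (polyOfCoeffs n z).roots.toFinset.card ≤ s}) := by
  let φ : (Fin n → ℝ) →L[ℝ] ℝ := ∑ i, c i • ContinuousLinearMap.proj i
  have hφ (z : Fin n → ℝ) : φ z = ∑ i, c i * z i := by simp [φ]
  have key : ∀ z ∈ hyperbolicSlice n s a, ∃ z' ∈ hyperbolicSlice n s a,
      (polyOfCoeffs n z').roots.toFinset.card ≤ s ∧ ∑ i, c i * z' i ≤ ∑ i, c i * z i := by
    intro z hz
    obtain ⟨z', hz', hle⟩ := (isCompact_hyperbolicSlice hs2 hsn).exists_mem_extremePoints_le φ hz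
    exact ⟨z', hz'.1, card_roots_toFinset_le_of_mem_extremePoints hz', by simpa only [hφ] using hle⟩
  refine ⟨key, csInf_eq_csInf_of_forall_exists_le ?_ ?_⟩
  · rintro _ ⟨z, hz, rfl⟩
    obtain ⟨z', hz', hcard, hle⟩ := key z hz
    exact ⟨_, ⟨z', ⟨hz', hcard⟩, rfl⟩, hle⟩
  · rintro _ ⟨z, hz, rfl⟩
    exact ⟨_, ⟨z, hz.1, rfl⟩, le_rfl⟩

/-- Minimizing a linear function over `H_s(a_1,…,a_s)`: each point of `H_s` is dominated by a
point of `H_s` whose polynomial has at most `s` distinct roots; consequently the infimum of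
the linear function over `H_s` equals its infimum over this subset. -/
theorem linear_min_on_Hs (n s : ℕ) (hn : 1 ≤ n) (hs2 : 2 ≤ s) (hsn : s ≤ n)
    (a : Fin n → ℝ) (c : Fin n → ℝ) :
    (∀ z ∈ {z : Fin n → ℝ | (∀ i : Fin n, (i : ℕ) < s → z i = a i) ∧
        (polyOfCoeffs n z).Splits},
      ∃ z' ∈ {z : Fin n → ℝ | (∀ i : Fin n, (i : ℕ) < s → z i = a i) ∧
          (polyOfCoeffs n z).Splits},
        (polyOfCoeffs n z').roots.toFinset.card ≤ s ∧
        ∑ i, c i * z' i ≤ ∑ i, c i * z i) ∧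
    sInf ((fun z : Fin n → ℝ => ∑ i, c i * z i) ''
        {z : Fin n → ℝ | (∀ i : Fin n, (i : ℕ) < s → z i = a i) ∧
          (polyOfCoeffs n z).Splits}) =
      sInf ((fun z : Fin n → ℝ => ∑ i, c i * z i) ''
        {z : Fin n → ℝ | ((∀ i : Fin n, (i : ℕ) < s → z i = a i) ∧
            (polyOfCoeffs n z).Splits) ∧
          (polyOfCoeffs n z).roots.toFinset.card ≤ s}) :=
  linear_min_on_Hs_general n s hs2 hsn a c
end
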